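/- arXiv:0810.1951 — 6 statements merged into one kernel-verified Lean document; each statement's English description precedes it below -/
import Mathlib

section
/- Let C(x) = exp(−(2/√x)·arctan(1/√x)) for x > 0 and fix p > 0. Then there is δ₀ > 0 such that for every δ ∈ (0, δ₀) there exists a unique ε(δ) > 0 with C(ε(δ)) = p·C(δ), and moreover ε(δ)/δ → 1 as δ → 0⁺. -/
/-!
Write `C = exp (-H)` with `H x = 2u arctan u`, `u = 1/√x`. On `(0, ∞)` the exponent `H` decreases
strictly and continuously from `∞` to `0`, so `C ε = p C δ`, i.e. `H ε = H δ - log p`, has exactly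
one solution `ε > 0` as soon as `H δ > log p`, which holds for small `δ`. Since
`arctan (1/u) = π/2 - arctan u`, `H x = π/√x - r` with `r ∈ (0, 2]`; hence `1/√ε - 1/√δ` stays
bounded while `1/√δ → ∞`, and so `√ε / √δ → 1`.
-/

open Real Filter Set

/-- The contraction coefficient of the saddle-node transition map. -/
noncomputable def sandleNodeC (x : ℝ) : ℝ :=
  Real.exp (-(2 / Real.sqrt x) * Real.arctan (1 / Real.sqrt x))

open Asymptotics Topology

namespace Real

lemma arctan_le_self {t : ℝ} (ht : 0 ≤ t) : arctan t ≤ t := by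
  simpa [tan_arctan] using le_tan (arctan_nonneg.2 ht) (arctan_lt_pi_div_two t)

lemma two_mul_arctan_div_self_mem_Ioc {s : ℝ} (hs : 0 < s) : 2 * arctan s / s ∈ Ioc 0 2 := by
  have := arctan_pos.2 hs
  refine ⟨by positivity, ?_⟩
  rw [div_le_iff₀ hs]
  linarith [arctan_le_self hs.le]

lemma tendsto_inv_sqrt_nhdsGT_zero : Tendsto (fun x => (√x)⁻¹) (𝓝[>] 0) atTop :=
  (tendsto_sqrt_atTop.comp tendsto_inv_nhdsGT_zero).congr sqrt_inv

end Real

lemma tendsto_div_of_abs_inv_sqrt_sub_le {α : Type*} {l : Filter α} {f g : α → ℝ} {K : ℝ}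
    (hf : ∀ᶠ a in l, 0 < f a) (hg : Tendsto g l (𝓝[>] 0))
    (hfg : ∀ᶠ a in l, |(√(f a))⁻¹ - (√(g a))⁻¹| ≤ K) :
    Tendsto (fun a => f a / g a) l (𝓝 1) := by
  have hg_pos : ∀ᶠ a in l, 0 < g a := (tendsto_nhdsWithin_iff.1 hg).2
  have h_inv : (fun a => (√(f a))⁻¹) ~[l] fun a => (√(g a))⁻¹ :=
    (IsBigO.of_bound K (by simpa using hfg) : _ =O[l] fun _ => (1 : ℝ)).trans_isLittleO
      ((isLittleO_one_left_iff ℝ).2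
        (tendsto_abs_atTop_atTop.comp (tendsto_inv_sqrt_nhdsGT_zero.comp hg)))
  have h_sq (u : α → ℝ) (hu : ∀ᶠ a in l, 0 < u a) : (fun a => (√(u a))⁻¹)⁻¹ ^ 2 =ᶠ[l] u :=
    hu.mono fun a ha => by simp [sq_sqrt ha.le]
  have hfg_equiv : f ~[l] g :=
    ((h_inv.inv.pow 2).congr_left (h_sq f hf)).congr_right (h_sq g hg_pos)
  exact (isEquivalent_iff_tendsto_one (hg_pos.mono fun _ h => h.ne')).1 hfg_equiv

noncomputable def saddleNodeExponent (x : ℝ) : ℝ :=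
  2 / √x * arctan (1 / √x)

lemma sandleNodeC_eq_exp_neg (x : ℝ) : sandleNodeC x = exp (-saddleNodeExponent x) := by
  rw [sandleNodeC, saddleNodeExponent, neg_mul]

lemma sandleNodeC_eq_mul_iff {p : ℝ} (hp : 0 < p) (x y : ℝ) :
    sandleNodeC x = p * sandleNodeC y ↔
      saddleNodeExponent x = saddleNodeExponent y - log p := by
  rw [sandleNodeC_eq_exp_neg, sandleNodeC_eq_exp_neg, ← exp_log hp, ← exp_add, exp_eq_exp, log_exp]
  constructor <;> intro h <;> linarith

section saddleNodeExponent

variable {x y : ℝ}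

lemma saddleNodeExponent_pos (hx : 0 < x) : 0 < saddleNodeExponent x := by
  have hs := sqrt_pos.2 hx
  have := arctan_pos.2 (one_div_pos.2 hs)
  unfold saddleNodeExponent
  positivity

lemma saddleNodeExponent_strictAntiOn : StrictAntiOn saddleNodeExponent (Ioi 0) := by
  intro x hx y hy hxy
  have hsx := sqrt_pos.2 hx
  have hsxy := sqrt_lt_sqrt hx.le hxy
  have hsy := hsx.trans hsxy
  have h_arctan : arctan (1 / √y) < arctan (1 / √x) :=
    arctan_strictMono (one_div_lt_one_div_of_lt hsx hsxy)
  have h_coeff : 2 / √y < 2 / √x := div_lt_div_of_pos_left two_pos hsx hsxy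
  exact mul_lt_mul'' h_coeff h_arctan (by positivity) (arctan_nonneg.2 (by positivity))

lemma continuousOn_saddleNodeExponent : ContinuousOn saddleNodeExponent (Ioi 0) := by
  have h_div (c : ℝ) : ContinuousOn (fun x => c / √x) (Ioi 0) :=
    continuousOn_const.div continuous_sqrt.continuousOn fun x hx => (sqrt_pos.2 hx).ne'
  exact (h_div 2).mul (continuous_arctan.comp_continuousOn (h_div 1))

lemma pi_mul_inv_sqrt_sub_saddleNodeExponent_mem_Ioc (hx : 0 < x) :
    π * (√x)⁻¹ - saddleNodeExponent x ∈ Ioc 0 2 := by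
  have hs := sqrt_pos.2 hx
  have h_eq : saddleNodeExponent x = π * (√x)⁻¹ - 2 * arctan √x / √x := by
    rw [saddleNodeExponent, one_div, arctan_inv_of_pos hs]
    field_simp
  rw [h_eq, sub_sub_cancel]
  exact two_mul_arctan_div_self_mem_Ioc hs

lemma tendsto_saddleNodeExponent_nhdsGT_zero :
    Tendsto saddleNodeExponent (𝓝[>] 0) atTop := by
  refine tendsto_atTop_mono' _ ?_
    (tendsto_atTop_add_const_right _ (-2) (tendsto_inv_sqrt_nhdsGT_zero.const_mul_atTop pi_pos))
  filter_upwards [self_mem_nhdsWithin] with x hx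
  linarith [(pi_mul_inv_sqrt_sub_saddleNodeExponent_mem_Ioc hx).2]

lemma tendsto_saddleNodeExponent_atTop : Tendsto saddleNodeExponent atTop (𝓝 0) := by
  have h_upper : Tendsto (fun x => π * (√x)⁻¹) atTop (𝓝 0) := by
    simpa using (tendsto_inv_atTop_zero.comp tendsto_sqrt_atTop).const_mul π
  refine tendsto_of_tendsto_of_tendsto_of_le_of_le' tendsto_const_nhds h_upper ?_ ?_
  all_goals filter_upwards [eventually_gt_atTop 0] with x hx
  · exact (saddleNodeExponent_pos hx).le
  · linarith [(pi_mul_inv_sqrt_sub_saddleNodeExponent_mem_Ioc hx).1]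

lemma surjOn_saddleNodeExponent : SurjOn saddleNodeExponent (Ioi 0) (Ioi 0) :=
  isPreconnected_Ioi.intermediate_value_Ioi (le_principal_iff.2 (Ioi_mem_atTop 0))
    (le_principal_iff.2 self_mem_nhdsWithin)
    continuousOn_saddleNodeExponent tendsto_saddleNodeExponent_atTop
    tendsto_saddleNodeExponent_nhdsGT_zero

lemma abs_inv_sqrt_sub_inv_sqrt_le {L : ℝ} (hx : 0 < x) (hy : 0 < y)
    (h : saddleNodeExponent x = saddleNodeExponent y - L) :
    |(√x)⁻¹ - (√y)⁻¹| ≤ (2 + |L|) / π := by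
  obtain ⟨hx₀, hx₂⟩ := pi_mul_inv_sqrt_sub_saddleNodeExponent_mem_Ioc hx
  obtain ⟨hy₀, hy₂⟩ := pi_mul_inv_sqrt_sub_saddleNodeExponent_mem_Ioc hy
  rw [le_div_iff₀ pi_pos, ← abs_of_pos pi_pos, ← abs_mul, abs_le]
  constructor <;> linarith [le_abs_self L, neg_abs_le L]

end saddleNodeExponent

/-- For fixed `p > 0` there is `δ₀ > 0` such that for every `δ ∈ (0, δ₀)` there is a
unique `ε(δ) > 0` with `C(ε(δ)) = p·C(δ)`, and moreover `ε(δ)/δ → 1` as `δ → 0⁺`. -/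
theorem saddleNodeC_inverse_curve (p : ℝ) (hp : 0 < p) :
    ∃ δ₀ > (0 : ℝ), ∃ E : ℝ → ℝ,
      (∀ δ ∈ Set.Ioo (0 : ℝ) δ₀,
        0 < E δ ∧ sandleNodeC (E δ) = p * sandleNodeC δ ∧
          ∀ ε' : ℝ, 0 < ε' → sandleNodeC ε' = p * sandleNodeC δ → ε' = E δ) ∧
      Filter.Tendsto (fun δ => E δ / δ) (nhdsWithin 0 (Set.Ioi 0)) (nhds 1) := by
  set H := saddleNodeExponent
  set L := log p
  have h_large : ∀ᶠ δ in 𝓝[>] 0, L < H δ :=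
    tendsto_saddleNodeExponent_nhdsGT_zero.eventually_gt_atTop L
  obtain ⟨δ₀, hδ₀, h_small⟩ := mem_nhdsGT_iff_exists_Ioo_subset.1 h_large
  set E : ℝ → ℝ := fun δ => Function.invFunOn H (Ioi 0) (H δ - L)
  have hE (δ : ℝ) (hδ : L < H δ) : 0 < E δ ∧ H (E δ) = H δ - L := by
    have h_sol := surjOn_saddleNodeExponent (sub_pos.2 hδ)
    exact ⟨Function.invFunOn_mem h_sol, Function.invFunOn_eq h_sol⟩
  refine ⟨δ₀, hδ₀, E, fun δ hδ => ?_, ?_⟩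
  · obtain ⟨hE_pos, hE_eq⟩ := hE δ (h_small hδ)
    refine ⟨hE_pos, (sandleNodeC_eq_mul_iff hp _ _).2 hE_eq, fun ε hε hCε => ?_⟩
    exact saddleNodeExponent_strictAntiOn.injOn hε hE_pos
      (((sandleNodeC_eq_mul_iff hp _ _).1 hCε).trans hE_eq.symm)
  · refine tendsto_div_of_abs_inv_sqrt_sub_le (g := fun δ => δ) (K := (2 + |L|) / π) ?_ tendsto_id ?_
    all_goals filter_upwards [self_mem_nhdsWithin, h_large] with δ hδ hLδ
    · exact (hE δ hLδ).1
    · exact abs_inv_sqrt_sub_inv_sqrt_le (hE δ hLδ).1 hδ (hE δ hLδ).2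
end

section
/- Let f : ℝ → ℝ be C¹ and suppose there are constants 0 < m ≤ M with m ≤ f'(y) ≤ M for all y. If p > 0 and p ∉ [m, M], then for every q ∈ ℝ the function φ(y) = q − p·y − f((q − f(y))/p) has nowhere vanishing derivative; in particular, every zero of φ is simple. -/
/-! With `u = (q - f y) / p`, the chain rule gives `φ'(y) = -p + f'(u) f'(y) / p`, which vanishes
only if `p² = f'(u) f'(y)`. Both factors lie in `[m, M] ⊆ (0, ∞)`, so their product lies in
`[m², M²]`, which misses `p²` because `p > 0` lies outside `[m, M]`. -/

open Set

theorem hasDerivAt_displacement {f : ℝ → ℝ} {p q y : ℝ} (hfy : DifferentiableAt ℝ f y)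
    (hfu : DifferentiableAt ℝ f ((q - f y) / p)) :
    HasDerivAt (fun y => q - p * y - f ((q - f y) / p))
      (-p + deriv f ((q - f y) / p) * deriv f y / p) y := by
  have hinner : HasDerivAt (fun y => (q - f y) / p) (-deriv f y / p) y := by
    simpa only [zero_sub] using (hfy.hasDerivAt.const_sub q).div_const p
  have hlin : HasDerivAt (fun y => q - p * y) (-p) y := by
    simpa only [id_eq, mul_one, zero_sub] using ((hasDerivAt_id y).const_mul p).const_sub q
  exact (hlin.sub (hfu.hasDerivAt.comp y hinner)).congr_deriv (by ring)

theorem mul_ne_sq_of_mem_Icc_of_notMem_Icc {m M p a b : ℝ} (hm : 0 < m) (hp : 0 < p)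
    (hpout : p ∉ Icc m M) (ha : a ∈ Icc m M) (hb : b ∈ Icc m M) : a * b ≠ p ^ 2 := by
  obtain ⟨hma, haM⟩ := ha
  obtain ⟨hmb, hbM⟩ := hb
  have hpout' : p < m ∨ M < p := by simpa only [mem_Icc, not_and_or, not_le] using hpout
  rcases hpout' with hpm | hMp
  · have : p ^ 2 < a * b := by nlinarith
    exact this.ne'
  · have : a * b < p ^ 2 := by nlinarith
    exact this.ne

theorem displacement_deriv_ne_zero_general (f : ℝ → ℝ)
    (m M : ℝ) (hm : 0 < m)
    (hbounds : ∀ y : ℝ, m ≤ deriv f y ∧ deriv f y ≤ M)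
    (p : ℝ) (hp : 0 < p) (hpout : p ∉ Set.Icc m M) :
    ∀ q y : ℝ, deriv (fun y => q - p * y - f ((q - f y) / p)) y ≠ 0 := by
  intro q y
  -- `deriv f` vanishes wherever `f` is not differentiable, so the lower bound forces differentiability.
  have hdiff (x : ℝ) : DifferentiableAt ℝ f x :=
    differentiableAt_of_deriv_ne_zero (hm.trans_le (hbounds x).1).ne'
  rw [(hasDerivAt_displacement (hdiff y) (hdiff ((q - f y) / p))).deriv]
  have hne := mul_ne_sq_of_mem_Icc_of_notMem_Icc hm hp hpout
    (hbounds ((q - f y) / p)) (hbounds y)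
  intro hzero
  field_simp at hzero
  exact hne (by linarith)

/-- If `f` is `C¹` with `m ≤ f' ≤ M` (`0 < m ≤ M`) and `p > 0` with `p ∉ [m, M]`,
then for every `q` the displacement function `φ(y) = q − p·y − f((q − f(y))/p)` has
nowhere vanishing derivative; in particular, every zero of `φ` is simple. -/
theorem displacement_deriv_ne_zero (f : ℝ → ℝ) (hf : ContDiff ℝ 1 f)
    (m M : ℝ) (hm : 0 < m) (hmM : m ≤ M)
    (hbounds : ∀ y : ℝ, m ≤ deriv f y ∧ deriv f y ≤ M)
    (p : ℝ) (hp : 0 < p) (hpout : p ∉ Set.Icc m M) :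
    ∀ q y : ℝ, deriv (fun y => q - p * y - f ((q - f y) / p)) y ≠ 0 :=
  displacement_deriv_ne_zero_general f m M hm hbounds p hp hpout
end

section
/- Let f : ℝ → ℝ be C¹ with f'(y) > 0 for all y, let p > 0 and q ∈ ℝ, and define φ(y) = q − p·y − f((q − f(y))/p). A point y ∈ ℝ satisfies both f(y) = q − p·y and φ'(y) = 0 if and only if p = f'(y) and q = f'(y)·y + f(y). Consequently, the set of parameters (p,q) for which the fixed point of the model Poincaré map is a multiple root of the period-two equation is exactly the curve parametrized by L₀(y) = (f'(y), f'(y)·y + f(y)). -/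
/-!
At a fixed point `y` of `P(y) = f⁻¹(q − p·y)` one has `(q − f y)/p = y`, so the chain rule gives
`φ'(y) = −p + f'(y)²/p = (f'(y)² − p²)/p`. With `p > 0` and `f'(y) > 0` this vanishes exactly when
`p = f'(y)`, and then the fixed-point equation reads `q = f'(y)·y + f(y)`.
-/

noncomputable def periodTwoDisplacement (f : ℝ → ℝ) (p q : ℝ) : ℝ → ℝ :=
  fun y => q - p * y - f ((q - f y) / p)

theorem hasDerivAt_periodTwoDisplacement {f : ℝ → ℝ} {p q y : ℝ}
    (hfy : DifferentiableAt ℝ f y) (hfPy : DifferentiableAt ℝ f ((q - f y) / p)) :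
    HasDerivAt (periodTwoDisplacement f p q)
      (-p + deriv f ((q - f y) / p) * deriv f y / p) y := by
  have hP : HasDerivAt (fun y => (q - f y) / p) (-deriv f y / p) y :=
    (hfy.hasDerivAt.const_sub q).div_const p
  have hlin : HasDerivAt (fun y : ℝ => q - p * y) (-p) y := by
    simpa using ((hasDerivAt_id y).const_mul p).const_sub q
  refine (hlin.sub (hfPy.hasDerivAt.comp y hP)).congr_deriv ?_
  ring

theorem div_eq_of_fixedPoint {f : ℝ → ℝ} {p q y : ℝ} (hp : p ≠ 0) (hfix : f y = q - p * y) :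
    (q - f y) / p = y := by
  rw [hfix]
  field_simp
  ring

theorem deriv_periodTwoDisplacement_of_fixedPoint {f : ℝ → ℝ} {p q y : ℝ} (hp : p ≠ 0)
    (hfy : DifferentiableAt ℝ f y) (hfix : f y = q - p * y) :
    deriv (periodTwoDisplacement f p q) y = (deriv f y ^ 2 - p ^ 2) / p := by
  have hφ := hasDerivAt_periodTwoDisplacement (p := p) (q := q) hfy
    (by rwa [div_eq_of_fixedPoint hp hfix])
  rw [hφ.deriv, div_eq_of_fixedPoint hp hfix]
  field_simp
  ring

theorem deriv_periodTwoDisplacement_eq_zero_iff {f : ℝ → ℝ} {p q y : ℝ} (hp : 0 < p)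
    (hf' : 0 < deriv f y) (hfix : f y = q - p * y) :
    deriv (periodTwoDisplacement f p q) y = 0 ↔ p = deriv f y := by
  -- `deriv` is `0` at points of non-differentiability, so `0 < deriv f y` already forces it.
  rw [deriv_periodTwoDisplacement_of_fixedPoint hp.ne'
    (differentiableAt_of_deriv_ne_zero hf'.ne') hfix, div_eq_zero_iff, sub_eq_zero,
    sq_eq_sq₀ hf'.le hp.le, or_iff_left hp.ne']
  exact eq_comm

theorem flip_curve_characterization_general (f : ℝ → ℝ)
    (hpos : ∀ y : ℝ, 0 < deriv f y) (p q : ℝ) (hp : 0 < p) :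
    ∀ y : ℝ,
      (f y = q - p * y ∧ deriv (fun y => q - p * y - f ((q - f y) / p)) y = 0) ↔
      (p = deriv f y ∧ q = deriv f y * y + f y) := by
  intro y
  change _ ∧ deriv (periodTwoDisplacement f p q) y = 0 ↔ _
  constructor
  · rintro ⟨hfix, hcrit⟩
    have hpe := (deriv_periodTwoDisplacement_eq_zero_iff hp (hpos y) hfix).mp hcrit
    exact ⟨hpe, by rw [← hpe]; linarith⟩
  · rintro ⟨hpe, hq⟩
    have hfix : f y = q - p * y := by rw [hq, hpe]; ring
    exact ⟨hfix, (deriv_periodTwoDisplacement_eq_zero_iff hp (hpos y) hfix).mpr hpe⟩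

/-- For `f` of class `C¹` with `f' > 0`, `p > 0` and `q ∈ ℝ`, a point `y` satisfies
both the fixed-point equation `f(y) = q − p·y` and `φ'(y) = 0` (where
`φ(y) = q − p·y − f((q − f(y))/p)`) if and only if `p = f'(y)` and
`q = f'(y)·y + f(y)`; so the corresponding parameter set is exactly the curve
`L₀(y) = (f'(y), f'(y)·y + f(y))`. -/
theorem flip_curve_characterization (f : ℝ → ℝ) (hf : ContDiff ℝ 1 f)
    (hpos : ∀ y : ℝ, 0 < deriv f y) (p q : ℝ) (hp : 0 < p) :
    ∀ y : ℝ,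
      (f y = q - p * y ∧ deriv (fun y => q - p * y - f ((q - f y) / p)) y = 0) ↔
      (p = deriv f y ∧ q = deriv f y * y + f y) :=
  flip_curve_characterization_general f hpos p q hp
end

section
/- Let f : ℝ → ℝ be differentiable with f'(y) > 0 for all y. Then the map L₀ : ℝ → ℝ² defined by L₀(y) = (f'(y), f'(y)·y + f(y)) is injective; i.e., the curve L₀ has no self-intersections. -/
/-- If `f` is differentiable with `f' > 0` everywhere, then the curve
`L₀(y) = (f'(y), f'(y)·y + f(y))` is injective, i.e. has no self-intersections. -/
theorem flip_curve_injective (f : ℝ → ℝ) (hf : Differentiable ℝ f)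
    (hpos : ∀ y : ℝ, 0 < deriv f y) :
    Function.Injective (fun y : ℝ => (deriv f y, deriv f y * y + f y)) := by
  have hmono : StrictMono f := strictMono_of_deriv_pos hpos
  intro a b h
  simp only [Prod.mk.injEq] at h
  obtain ⟨h1, h2⟩ := h
  rcases lt_trichotomy a b with hab | hab | hab
  · exfalso
    have hfab : f a < f b := hmono hab
    have hp : 0 < deriv f a := hpos a
    rw [← h1] at h2
    nlinarith [mul_lt_mul_of_pos_left hab hp]
  · exact hab
  · exfalso
    have hfab : f b < f a := hmono hab
    have hp : 0 < deriv f a := hpos a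
    rw [← h1] at h2
    nlinarith [mul_lt_mul_of_pos_left hab hp]
end

section
/- Let f : ℝ → ℝ be C³ with f'(y) > 0 for all y. Fix c ∈ ℝ and set p = f'(c), q = f'(c)·c + f(c), and φ(y) = q − p·y − f((q − f(y))/p). Then φ(c) = 0, φ'(c) = 0, φ''(c) = 0, and φ'''(c) = 2·f'''(c) − 3·f''(c)²/f'(c). -/
/-!
Write `φ(y) = q − p·y − f(g(y))` with `g(y) = (q − f(y))/p`. The choice of `(p, q)` makes `c` a
fixed point of `g` with `g'(c) = −1`, and `g⁽ᵏ⁾(c) = −f⁽ᵏ⁾(c)/p` for `k ≥ 1`. Faà di Bruno's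
formula for `f ∘ g` up to order three then reduces every claim to an identity in
`f'(c), f''(c), f'''(c)`; the affine part `q − p·y` only contributes to `φ'`.
-/

section

variable {𝕜 : Type*} [NontriviallyNormedField 𝕜]

theorem iteratedDeriv_const_sub_div {n : ℕ} (hn : 0 < n) (f : 𝕜 → 𝕜) (a b x : 𝕜) :
    iteratedDeriv n (fun y => (a - f y) / b) x = -iteratedDeriv n f x / b := by
  rw [iteratedDeriv_div_const, iteratedDeriv_const_sub hn, iteratedDeriv_neg]

theorem deriv_const_sub_mul_sub {F : 𝕜 → 𝕜} {x : 𝕜} (hF : DifferentiableAt 𝕜 F x) (a b : 𝕜) :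
    deriv (fun y => a - b * y - F y) x = -b - deriv F x := by
  simpa using ((((hasDerivAt_id x).const_mul b).const_sub a).fun_sub hF.hasDerivAt).deriv

theorem iteratedDeriv_const_sub_mul_sub {F : 𝕜 → 𝕜} (hF : Differentiable 𝕜 F) (a b : 𝕜)
    {n : ℕ} (hn : 2 ≤ n) (x : 𝕜) :
    iteratedDeriv n (fun y => a - b * y - F y) x = -iteratedDeriv n F x := by
  obtain ⟨m, rfl⟩ := Nat.exists_eq_add_of_le' hn
  have hderiv : deriv (fun y => a - b * y - F y) = fun y => -b - deriv F y :=
    funext fun y => deriv_const_sub_mul_sub (hF y) a b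
  rw [iteratedDeriv_succ', hderiv, iteratedDeriv_const_sub m.succ_pos, iteratedDeriv_neg,
    ← iteratedDeriv_succ']

end

/-- Let `f` be `C³` with `f' > 0`, and on the flip curve set `p = f'(c)`,
`q = f'(c)·c + f(c)`, `φ(y) = q − p·y − f((q − f(y))/p)`. Then
`φ(c) = φ'(c) = φ''(c) = 0` and `φ'''(c) = 2·f'''(c) − 3·f''(c)²/f'(c)`. -/
theorem flip_point_derivatives (f : ℝ → ℝ) (hf : ContDiff ℝ 3 f)
    (hpos : ∀ y : ℝ, 0 < deriv f y) (c : ℝ)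
    (p q : ℝ) (hp : p = deriv f c) (hq : q = deriv f c * c + f c) :
    (fun y => q - p * y - f ((q - f y) / p)) c = 0 ∧
    deriv (fun y => q - p * y - f ((q - f y) / p)) c = 0 ∧
    iteratedDeriv 2 (fun y => q - p * y - f ((q - f y) / p)) c = 0 ∧
    iteratedDeriv 3 (fun y => q - p * y - f ((q - f y) / p)) c
      = 2 * iteratedDeriv 3 f c - 3 * (iteratedDeriv 2 f c) ^ 2 / deriv f c := by
  have hp0 : p ≠ 0 := hp ▸ (hpos c).ne'
  set g : ℝ → ℝ := fun y => (q - f y) / p with hg_def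
  have hgc : g c = c := by simp only [hg_def, hq]; field_simp; rw [hp]; ring
  have hg' : deriv g c = -1 := by
    rw [← iteratedDeriv_one, iteratedDeriv_const_sub_div one_pos, iteratedDeriv_one, ← hp]
    field_simp
  have hg : ContDiff ℝ 3 g := (contDiff_const.sub hf).div_const p
  have hfg : ContDiff ℝ 3 (f ∘ g) := hf.comp hg
  have hφ : (fun y => q - p * y - f ((q - f y) / p)) = fun y => q - p * y - (f ∘ g) y := rfl
  have hfg1 : Differentiable ℝ (f ∘ g) := hfg.differentiable (by norm_num)
  rw [hφ, deriv_const_sub_mul_sub (hfg1 c) q p,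
    iteratedDeriv_const_sub_mul_sub hfg1 q p le_rfl,
    iteratedDeriv_const_sub_mul_sub hfg1 q p (by norm_num),
    iteratedDeriv_comp_two (hf.contDiffAt.of_le (by norm_num)) (hg.contDiffAt.of_le (by norm_num)),
    iteratedDeriv_comp_three hf.contDiffAt hg.contDiffAt,
    deriv_comp c (hf.differentiable (by norm_num) _) (hg.differentiable (by norm_num) c),
    iteratedDeriv_const_sub_div two_pos, iteratedDeriv_const_sub_div three_pos, hgc, hg', ← hp]
  refine ⟨by simp [hgc, hq, hp], ?_, ?_, ?_⟩ <;> field_simp <;> ring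
end

section
/- Let k ≥ 1 and let f : ℝ → ℝ be a C^k bijection with f'(y) > 0 for all y (so that f⁻¹ is also C^k). Let K be a compact subset of (0,∞) × ℝ, and suppose that for every (p,q) ∈ K there exists m with 1 ≤ m ≤ k such that (−p)ᵐ·(f⁻¹)⁽ᵐ⁾(q) + f⁽ᵐ⁾(0)/p ≠ 0. Then there exists η > 0 such that for every (p,q) ∈ K, the displacement function V_{p,q}(y) = f⁻¹(q − p·y) + f(y)/p − q/p has at most k zeros in the interval [−η, η]. -/
/-!
Near `y = 0` the displacement map `V_{p,q}` has some derivative of order `m ≤ k` without zeros,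
uniformly for `(p, q)` in a neighbourhood of any point of `K`, because that derivative
is continuous in `(y, p, q)` and nonzero at `y = 0`. Compactness of `K` makes the neighbourhood of
`y = 0` uniform in `(p, q) ∈ K`, and Rolle's theorem, applied `m` times, shows that a function
whose `m`-th derivative does not vanish on an interval has at most `m` zeros there.
-/

open Set Function Filter Topology

theorem encard_zeros_le_encard_zeros_deriv_add_one {f : ℝ → ℝ} {s : Set ℝ} (hs : s.OrdConnected)
    (hf : Differentiable ℝ f) :
    {x ∈ s | f x = 0}.encard ≤ {x ∈ s | deriv f x = 0}.encard + 1 := by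
  obtain hZ' | hZ' := {x ∈ s | deriv f x = 0}.finite_or_infinite
  swap
  · simp [hZ'.encard_eq]
  rw [hZ'.encard_eq_coe_toFinset_card]
  by_contra! hlt
  obtain ⟨T, hTZ, hT⟩ := exists_subset_encard_eq (Order.add_one_le_of_lt hlt)
  have hTfin : T.Finite := finite_of_encard_eq_coe (by exact_mod_cast hT)
  have hinterleaved := Finset.card_le_of_interleaved (s := hTfin.toFinset) (t := hZ'.toFinset)
    fun x hx y hy hxy _ => by
      simp only [Finite.mem_toFinset] at hx hy ⊢
      obtain ⟨c, hc, hc0⟩ :=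
        exists_deriv_eq_zero hxy hf.continuous.continuousOn ((hTZ hx).2.trans (hTZ hy).2.symm)
      exact ⟨c, ⟨hs.out (hTZ hx).1 (hTZ hy).1 (Ioo_subset_Icc_self hc), hc0⟩, hc⟩
  rw [hTfin.encard_eq_coe_toFinset_card] at hT
  norm_cast at hT
  omega

theorem encard_zeros_le_encard_zeros_iteratedDeriv_add {n : ℕ} {f : ℝ → ℝ} {s : Set ℝ}
    (hs : s.OrdConnected) (hf : ContDiff ℝ n f) :
    {x ∈ s | f x = 0}.encard ≤ {x ∈ s | iteratedDeriv n f x = 0}.encard + n := by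
  induction n generalizing f with
  | zero => simp
  | succ n ih =>
    obtain ⟨hdiff, -, hderiv⟩ := (contDiff_succ_iff_deriv (n := n)).1 (by exact_mod_cast hf)
    calc {x ∈ s | f x = 0}.encard
        ≤ {x ∈ s | deriv f x = 0}.encard + 1 :=
          encard_zeros_le_encard_zeros_deriv_add_one hs hdiff
      _ ≤ {x ∈ s | iteratedDeriv n (deriv f) x = 0}.encard + n + 1 := by
        gcongr; exact ih hderiv
      _ = {x ∈ s | iteratedDeriv (n + 1) f x = 0}.encard + (n + 1 : ℕ) := by
        rw [iteratedDeriv_succ', add_assoc]; norm_cast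

theorem encard_zeros_le_of_iteratedDeriv_ne_zero {n : ℕ} {f : ℝ → ℝ} {s : Set ℝ}
    (hs : s.OrdConnected) (hf : ContDiff ℝ n f) (hne : ∀ x ∈ s, iteratedDeriv n f x ≠ 0) :
    {x ∈ s | f x = 0}.encard ≤ n := by
  simpa [sep_eq_empty_iff_mem_false.2 hne] using
    encard_zeros_le_encard_zeros_iteratedDeriv_add hs hf

theorem ContDiff.invFun_of_deriv_pos {n : WithTop ℕ∞} {f : ℝ → ℝ} (hf : ContDiff ℝ n f)
    (hsurj : Surjective f) (hpos : ∀ x, 0 < deriv f x) : ContDiff ℝ n (invFun f) := by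
  have hdiff (x : ℝ) : DifferentiableAt ℝ f x := differentiableAt_of_deriv_ne_zero (hpos x).ne'
  let e : ℝ ≃o ℝ := (strictMono_of_deriv_pos hpos).orderIsoOfSurjective f hsurj
  have he : invFun f = e.toHomeomorph.symm := by
    funext y
    exact e.injective ((invFun_eq (hsurj y)).trans (e.apply_symm_apply y).symm)
  rw [he]
  exact e.toHomeomorph.contDiff_symm_deriv (fun x => (hpos x).ne')
    (fun x => (hdiff x).hasDerivAt) hf

theorem IsCompact.exists_mem_nhds_forall_exists_forall {X Y ι : Type*} [TopologicalSpace X]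
    [TopologicalSpace Y] {K : Set Y} (hK : IsCompact K) {x₀ : X} {P : ι → X → Y → Prop}
    (hP : ∀ y ∈ K, ∃ i, ∀ᶠ z : X × Y in 𝓝 (x₀, y), P i z.1 z.2) :
    ∃ U ∈ 𝓝 x₀, ∀ y ∈ K, ∃ i, ∀ x ∈ U, P i x y := by
  refine hK.induction_on (p := fun S => ∃ U ∈ 𝓝 x₀, ∀ y ∈ S, ∃ i, ∀ x ∈ U, P i x y)
    ⟨univ, univ_mem, by simp⟩ ?_ ?_ ?_
  · rintro S T hST ⟨U, hU, hT⟩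
    exact ⟨U, hU, fun y hy => hT y (hST hy)⟩
  · rintro S T ⟨U, hU, hS⟩ ⟨V, hV, hT⟩
    refine ⟨U ∩ V, inter_mem hU hV, fun y hy => ?_⟩
    rcases hy with hy | hy
    · obtain ⟨i, hi⟩ := hS y hy
      exact ⟨i, fun x hx => hi x hx.1⟩
    · obtain ⟨i, hi⟩ := hT y hy
      exact ⟨i, fun x hx => hi x hx.2⟩
  · intro y hy
    obtain ⟨i, hi⟩ := hP y hy
    obtain ⟨U, hU, V, hV, hUV⟩ := mem_nhds_prod_iff.1 hi
    exact ⟨V, mem_nhdsWithin_of_mem_nhds hV, U, hU,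
      fun y' hy' => ⟨i, fun x hx => hUV (mk_mem_prod hx hy')⟩⟩

theorem iteratedDeriv_comp_const_sub_mul {𝕜 : Type*} [NontriviallyNormedField 𝕜] {n : ℕ}
    {g : 𝕜 → 𝕜} (hg : ContDiff 𝕜 n g) (p q y : 𝕜) :
    iteratedDeriv n (fun y => g (q - p * y)) y = (-p) ^ n * iteratedDeriv n g (q - p * y) := by
  have hgq : ContDiff 𝕜 n (fun z => g (q - z)) := hg.comp (contDiff_const.sub contDiff_id)
  rw [iteratedDeriv_comp_const_mul hgq p, iteratedDeriv_comp_const_sub]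
  simp only [smul_eq_mul, neg_pow p, mul_comm, mul_left_comm]

/-- The displacement map `V_{p,q}` of the paper, with `g` in place of `f⁻¹`. -/
noncomputable def displacementMap (f g : ℝ → ℝ) (p q : ℝ) (y : ℝ) : ℝ :=
  g (q - p * y) + f y / p - q / p

theorem contDiff_displacementMap {n : WithTop ℕ∞} {f g : ℝ → ℝ} (hf : ContDiff ℝ n f)
    (hg : ContDiff ℝ n g) (p q : ℝ) : ContDiff ℝ n (displacementMap f g p q) :=
  ((hg.comp (contDiff_const.sub (contDiff_const.mul contDiff_id))).add
    (hf.div_const p)).sub contDiff_const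

theorem iteratedDeriv_displacementMap {m : ℕ} {f g : ℝ → ℝ} (hf : ContDiff ℝ m f)
    (hg : ContDiff ℝ m g) (hm : 0 < m) (p q y : ℝ) :
    iteratedDeriv m (displacementMap f g p q) y =
      (-p) ^ m * iteratedDeriv m g (q - p * y) + iteratedDeriv m f y / p := by
  have hgaff : ContDiff ℝ m (fun y => g (q - p * y)) :=
    hg.comp (contDiff_const.sub (contDiff_const.mul contDiff_id))
  unfold displacementMap
  rw [iteratedDeriv_fun_sub ((hgaff.add (hf.div_const p)).contDiffAt) contDiffAt_const,
    iteratedDeriv_fun_add hgaff.contDiffAt (hf.div_const p).contDiffAt,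
    iteratedDeriv_comp_const_sub_mul hg, iteratedDeriv_div_const, iteratedDeriv_const,
    if_neg hm.ne', sub_zero]

theorem eventually_iteratedDeriv_displacementMap_ne_zero {m : ℕ} {f g : ℝ → ℝ}
    (hf : ContDiff ℝ m f) (hg : ContDiff ℝ m g) (hm : 0 < m) {p q : ℝ} (hp : p ≠ 0)
    (hne : (-p) ^ m * iteratedDeriv m g q + iteratedDeriv m f 0 / p ≠ 0) :
    ∀ᶠ z : ℝ × ℝ × ℝ in 𝓝 (0, p, q),
      iteratedDeriv m (displacementMap f g z.2.1 z.2.2) z.1 ≠ 0 := by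
  simp_rw [iteratedDeriv_displacementMap hf hg hm]
  have hgm := hg.continuous_iteratedDeriv m le_rfl
  have hfm := hf.continuous_iteratedDeriv m le_rfl
  refine ContinuousAt.eventually_ne ?_ (by simpa using hne)
  exact ((continuous_snd.fst.neg.pow m).mul
    (hgm.comp (continuous_snd.snd.sub (continuous_snd.fst.mul continuous_fst)))).continuousAt.add
    ((hfm.comp continuous_fst).continuousAt.div continuous_snd.fst.continuousAt hp)

theorem finite_cyclicity_general (k : ℕ) (f : ℝ → ℝ)
    (hf : ContDiff ℝ (k : ℕ∞) f) (hbij : Function.Bijective f)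
    (hpos : ∀ y : ℝ, 0 < deriv f y)
    (K : Set (ℝ × ℝ)) (hK : IsCompact K) (hKsub : K ⊆ Set.Ioi 0 ×ˢ Set.univ)
    (hgen : ∀ pq ∈ K, ∃ m : ℕ, 1 ≤ m ∧ m ≤ k ∧
      (-pq.1) ^ m * iteratedDeriv m (Function.invFun f) pq.2
        + iteratedDeriv m f 0 / pq.1 ≠ 0) :
    ∃ η > (0 : ℝ), ∀ pq ∈ K,
      Set.encard {y ∈ Set.Icc (-η) η |
        Function.invFun f (pq.2 - pq.1 * y) + f y / pq.1 - pq.2 / pq.1 = 0}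
        ≤ (k : ℕ∞) := by
  have hg : ContDiff ℝ k (invFun f) := hf.invFun_of_deriv_pos hbij.2 hpos
  obtain ⟨U, hU, hUK⟩ := hK.exists_mem_nhds_forall_exists_forall
    (P := fun m y pq => m ≤ k ∧ iteratedDeriv m (displacementMap f (invFun f) pq.1 pq.2) y ≠ 0)
    fun pq hpq => by
      obtain ⟨m, hm, hmk, hne⟩ := hgen pq hpq
      have hmk' : (m : WithTop ℕ∞) ≤ k := by exact_mod_cast hmk
      exact ⟨m, (eventually_iteratedDeriv_displacementMap_ne_zero (hf.of_le hmk') (hg.of_le hmk')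
        hm (hKsub hpq).1.ne' hne).mono fun _ hz => ⟨hmk, hz⟩⟩
  obtain ⟨η, hη, hηU⟩ := Metric.nhds_basis_closedBall.mem_iff.1 hU
  refine ⟨η, hη, fun pq hpq => ?_⟩
  obtain ⟨m, hm⟩ := hUK pq hpq
  have hmk := (hm 0 (mem_of_mem_nhds hU)).1
  have hmk' : (m : WithTop ℕ∞) ≤ k := by exact_mod_cast hmk
  calc _ ≤ (m : ℕ∞) := encard_zeros_le_of_iteratedDeriv_ne_zero ordConnected_Icc
        (contDiff_displacementMap (hf.of_le hmk') (hg.of_le hmk') pq.1 pq.2)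
        fun y hy => (hm y (hηU (by simpa [Real.closedBall_eq_Icc] using hy))).2
    _ ≤ k := by exact_mod_cast hmk

/-- Finite cyclicity: let `k ≥ 1`, let `f` be a `C^k` bijection of `ℝ` with `f' > 0`
everywhere, and let `K` be a compact subset of `(0,∞) × ℝ` such that for every
`(p,q) ∈ K` some derivative `(−p)ᵐ·(f⁻¹)⁽ᵐ⁾(q) + f⁽ᵐ⁾(0)/p` with `1 ≤ m ≤ k` is
nonzero. Then there is `η > 0` such that for every `(p,q) ∈ K` the displacement
function `V(y) = f⁻¹(q − p·y) + f(y)/p − q/p` has at most `k` zeros in `[−η, η]`. -/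
theorem finite_cyclicity (k : ℕ) (hk : 1 ≤ k) (f : ℝ → ℝ)
    (hf : ContDiff ℝ (k : ℕ∞) f) (hbij : Function.Bijective f)
    (hpos : ∀ y : ℝ, 0 < deriv f y)
    (K : Set (ℝ × ℝ)) (hK : IsCompact K) (hKsub : K ⊆ Set.Ioi 0 ×ˢ Set.univ)
    (hgen : ∀ pq ∈ K, ∃ m : ℕ, 1 ≤ m ∧ m ≤ k ∧
      (-pq.1) ^ m * iteratedDeriv m (Function.invFun f) pq.2
        + iteratedDeriv m f 0 / pq.1 ≠ 0) :
    ∃ η > (0 : ℝ), ∀ pq ∈ K,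
      Set.encard {y ∈ Set.Icc (-η) η |
        Function.invFun f (pq.2 - pq.1 * y) + f y / pq.1 - pq.2 / pq.1 = 0}
        ≤ (k : ℕ∞) :=
  finite_cyclicity_general k f hf hbij hpos K hK hKsub hgen
end
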